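/- arXiv:2601.16764 — 2 statements merged into one kernel-verified Lean document; each statement's English description precedes it below -/
import Mathlib

section
/- Let U ⊆ ℝ^n be a C-set. For every ε ∈ [0, d(U)), the maximal projection distance onto the tightened set satisfies ε ≤ r(U, ε) ≤ ε · D(U)/d(U), where r(U, ε) := max_{u∈U} ‖u − Π_{T(U,ε)}(u)‖. -/
open Metric

/-- The ε-tightening of a set `U`. -/
def tighten {n : ℕ} (U : Set (EuclideanSpace ℝ (Fin n))) (ε : ℝ) :
    Set (EuclideanSpace ℝ (Fin n)) :=
  {u ∈ U | ∀ Δ : EuclideanSpace ℝ (Fin n), ‖Δ‖ ≤ ε → u + Δ ∈ U}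

/-- The inradius of a set containing the origin. -/
noncomputable def inradius {n : ℕ} (U : Set (EuclideanSpace ℝ (Fin n))) : ℝ :=
  sSup {δ : ℝ | closedBall (0 : EuclideanSpace ℝ (Fin n)) δ ⊆ U}

/-- The radius of a set: supremum of the norms of its elements. -/
noncomputable def sradius {n : ℕ} (U : Set (EuclideanSpace ℝ (Fin n))) : ℝ :=
  sSup ((fun u => ‖u‖) '' U)

/-- `P` is the Euclidean projection onto the set `S`. -/
def IsProjOn {n : ℕ} (S : Set (EuclideanSpace ℝ (Fin n)))
    (P : EuclideanSpace ℝ (Fin n) → EuclideanSpace ℝ (Fin n)) : Prop :=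
  ∀ u, P u ∈ S ∧ ∀ w ∈ S, ‖u - P u‖ ≤ ‖u - w‖

/-- Maximal projection distance onto the ε-tightened set. -/
noncomputable def maxProjDist {n : ℕ} (U : Set (EuclideanSpace ℝ (Fin n)))
    (P : EuclideanSpace ℝ (Fin n) → EuclideanSpace ℝ (Fin n)) : ℝ :=
  sSup ((fun u => ‖u - P u‖) '' U)

theorem stmt3 {n : ℕ} (U : Set (EuclideanSpace ℝ (Fin n)))
    (hconv : Convex ℝ U) (hcomp : IsCompact U) (hint : (0 : EuclideanSpace ℝ (Fin n)) ∈ interior U)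
    (ε : ℝ) (hε0 : 0 ≤ ε) (hεd : ε < inradius U)
    (P : EuclideanSpace ℝ (Fin n) → EuclideanSpace ℝ (Fin n))
    (hP : IsProjOn (tighten U ε) P) :
    ε ≤ maxProjDist U P ∧ maxProjDist U P ≤ ε * sradius U / inradius U := by
  classical
  have hU0 : (0 : (EuclideanSpace ℝ (Fin n))) ∈ U := interior_subset hint
  have hne : U.Nonempty := ⟨0, hU0⟩
  -- degenerate case: subsingleton space
  rcases subsingleton_or_nontrivial (EuclideanSpace ℝ (Fin n)) with hsub | hnt
  · exfalso
    have hS : {δ : ℝ | closedBall (0 : (EuclideanSpace ℝ (Fin n))) δ ⊆ U} = Set.univ := by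
      refine Set.eq_univ_of_forall fun δ => ?_
      intro x _
      have : x = 0 := Subsingleton.elim x 0
      rw [this]; exact hU0
    have : inradius U = 0 := by
      rw [inradius, hS]
      exact Real.sSup_of_not_bddAbove not_bddAbove_univ
    rw [this] at hεd; linarith
  -- max norm element
  obtain ⟨m, hmU, hm⟩ := hcomp.exists_isMaxOn hne continuous_norm.continuousOn
  have hmax : ∀ u ∈ U, ‖u‖ ≤ ‖m‖ := fun u hu => hm hu
  set S : Set ℝ := {δ : ℝ | closedBall (0 : (EuclideanSpace ℝ (Fin n))) δ ⊆ U} with hSdef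
  have hSbdd : BddAbove S := by
    refine ⟨‖m‖, fun δ hδ => ?_⟩
    rcases le_or_gt δ 0 with h | h
    · exact h.trans (norm_nonneg m)
    · obtain ⟨x, hx⟩ := exists_ne (0 : (EuclideanSpace ℝ (Fin n)))
      have hxn : ‖x‖ ≠ 0 := norm_ne_zero_iff.2 hx
      have hmem : (δ / ‖x‖) • x ∈ closedBall (0 : (EuclideanSpace ℝ (Fin n))) δ := by
        simp only [mem_closedBall, dist_zero_right, norm_smul, Real.norm_eq_abs,
          abs_div, abs_norm, abs_of_pos h]
        rw [div_mul_cancel₀ _ hxn]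
      have := hmax _ (hδ hmem)
      rwa [norm_smul, Real.norm_eq_abs, abs_div, abs_norm, abs_of_pos h,
        div_mul_cancel₀ _ hxn] at this
  have hSne : S.Nonempty := by
    obtain ⟨δ, hδ0, hδ⟩ := Metric.isOpen_iff.1 isOpen_interior 0 hint
    exact ⟨δ/2, (closedBall_subset_ball (by linarith)).trans (hδ.trans interior_subset)⟩
  -- there is δ ∈ S with ε < δ
  obtain ⟨δ₀, hδ₀S, hεδ₀⟩ := exists_lt_of_lt_csSup hSne hεd
  have hballε : closedBall (0 : (EuclideanSpace ℝ (Fin n))) ε ⊆ U :=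
    (closedBall_subset_closedBall hεδ₀.le).trans hδ₀S
  have h0T : (0 : (EuclideanSpace ℝ (Fin n))) ∈ tighten U ε := by
    refine ⟨hU0, fun Δ hΔ => ?_⟩
    rw [zero_add]
    exact hballε (by simpa [mem_closedBall, dist_zero_right] using hΔ)
  -- bddAbove of projection distances
  have hprojbdd : BddAbove ((fun u => ‖u - P u‖) '' U) := by
    refine ⟨‖m‖, ?_⟩
    rintro x ⟨u, hu, rfl⟩
    calc ‖u - P u‖ ≤ ‖u - 0‖ := (hP u).2 0 h0T
    _ ≤ ‖m‖ := by rw [sub_zero]; exact hmax u hu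
  have hUclosed : IsClosed U := hcomp.isClosed
  -- lower bound
  have hlow : ε ≤ maxProjDist U P := by
    have hUuniv : U ≠ Set.univ := fun h => by
      have := hcomp; rw [h] at this
      exact (NormedSpace.noncompactSpace ℝ (EuclideanSpace ℝ (Fin n))).noncompact_univ this
    obtain ⟨u₀, hu₀⟩ := nonempty_frontier_iff.2 ⟨hne, hUuniv⟩
    have hu₀U : u₀ ∈ U := by
      have := frontier_subset_closure hu₀
      rwa [hUclosed.closure_eq] at this
    have hdist : ε ≤ ‖u₀ - P u₀‖ := by
      by_contra h
      push_neg at h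
      have hPT := (hP u₀).1
      have : u₀ ∈ interior U := by
        have hball : ball (P u₀) ε ⊆ U := by
          intro y hy
          have := hPT.2 (y - P u₀) (by
            rw [mem_ball, dist_eq_norm] at hy
            exact (le_of_lt (by simpa [norm_sub_rev] using hy)))
          simpa using this
        have : ball (P u₀) ε ⊆ interior U := isOpen_ball.subset_interior_iff.2 hball
        apply this
        rw [mem_ball, dist_eq_norm]
        simpa [norm_sub_rev] using h
      exact hu₀.2 this
    calc ε ≤ ‖u₀ - P u₀‖ := hdist
    _ ≤ maxProjDist U P := le_csSup hprojbdd ⟨u₀, hu₀U, rfl⟩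
  refine ⟨hlow, ?_⟩
  -- upper bound
  have hD0 : 0 ≤ sradius U := le_csSup ⟨‖m‖, by rintro x ⟨u, hu, rfl⟩; exact hmax u hu⟩
    ⟨0, hU0, norm_zero⟩
  have hDle : ∀ u ∈ U, ‖u‖ ≤ sradius U := fun u hu =>
    le_csSup ⟨‖m‖, by rintro x ⟨v, hv, rfl⟩; exact hmax v hv⟩ ⟨u, hu, rfl⟩
  have hd0 : 0 < inradius U := lt_of_le_of_lt hε0 hεd
  -- key: for δ ∈ S with ε < δ, maxProjDist ≤ ε * sradius / δ
  have hkey : ∀ δ ∈ S, ε < δ → maxProjDist U P ≤ ε * sradius U / δ := by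
    intro δ hδS hεδ
    have hδ0 : 0 < δ := lt_of_le_of_lt hε0 hεδ
    refine csSup_le (hne.image _) ?_
    rintro x ⟨u, hu, rfl⟩
    set lam : ℝ := ε / δ with hlam
    have hlam0 : 0 ≤ lam := div_nonneg hε0 hδ0.le
    have hlam1 : lam < 1 := (div_lt_one hδ0).2 hεδ
    set v : (EuclideanSpace ℝ (Fin n)) := (1 - lam) • u with hv
    have hvT : v ∈ tighten U ε := by
      constructor
      · have := hconv hu hU0 (by linarith : (0:ℝ) ≤ 1 - lam) hlam0 (by ring)
        simpa [hv] using this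
      · intro Δ hΔ
        rcases eq_or_lt_of_le hε0 with hε | hε
        · have : Δ = 0 := norm_le_zero_iff.1 (hΔ.trans hε.symm.le)
          subst this
          rw [add_zero]
          have := hconv hu hU0 (by linarith : (0:ℝ) ≤ 1 - lam) hlam0 (by ring)
          simpa [hv] using this
        · have hlampos : 0 < lam := div_pos hε hδ0
          have hmem : lam⁻¹ • Δ ∈ U := by
            apply hδS
            simp only [mem_closedBall, dist_zero_right, norm_smul, Real.norm_eq_abs,
              abs_inv, abs_of_pos hlampos]
            rw [inv_mul_le_iff₀ hlampos, hlam]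
            calc ‖Δ‖ ≤ ε := hΔ
            _ = ε / δ * δ := by field_simp
          have := hconv hu hmem (by linarith : (0:ℝ) ≤ 1 - lam) hlampos.le (by ring)
          have heq : (1 - lam) • u + lam • (lam⁻¹ • Δ) = v + Δ := by
            rw [smul_smul, mul_inv_cancel₀ hlampos.ne', one_smul]
          rwa [heq] at this
    calc ‖u - P u‖ ≤ ‖u - v‖ := (hP u).2 v hvT
    _ = lam * ‖u‖ := by
        rw [hv]
        have : u - (1 - lam) • u = lam • u := by
          rw [sub_smul, one_smul]; abel
        rw [this, norm_smul, Real.norm_eq_abs, abs_of_nonneg hlam0]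
    _ ≤ lam * sradius U := mul_le_mul_of_nonneg_left (hDle u hu) hlam0
    _ = ε * sradius U / δ := by rw [hlam]; ring
  -- pass to the limit δ → inradius U
  have hfinal : maxProjDist U P * inradius U ≤ ε * sradius U := by
    refine le_of_forall_pos_le_add fun η hη => ?_
    rcases eq_or_lt_of_le (hε0.trans hlow) with hr | hr
    · rw [← hr, zero_mul]
      positivity
    · have h1 : max ε (inradius U - η / maxProjDist U P) < inradius U := by
        apply max_lt hεd
        have : 0 < η / maxProjDist U P := div_pos hη hr
        linarith
      obtain ⟨δ, hδS, hδgt⟩ := exists_lt_of_lt_csSup hSne h1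
      have hεδ : ε < δ := lt_of_le_of_lt (le_max_left _ _) hδgt
      have hδ0 : 0 < δ := lt_of_le_of_lt hε0 hεδ
      have h2 : maxProjDist U P * δ ≤ ε * sradius U := by
        have := hkey δ hδS hεδ
        rwa [le_div_iff₀ hδ0] at this
      have h3 : inradius U - η / maxProjDist U P < δ :=
        lt_of_le_of_lt (le_max_right _ _) hδgt
      have h4 : maxProjDist U P * inradius U < maxProjDist U P * δ + η := by
        have := mul_lt_mul_of_pos_left h3 hr
        rw [mul_sub] at this
        have hd : maxProjDist U P * (η / maxProjDist U P) = η := by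
          field_simp
        linarith [hd ▸ this]
      linarith
  rw [le_div_iff₀ hd0]
  exact hfinal
end

section
/- Let U ⊆ ℝ^n be a C-set and δ₁ > 0. Suppose ε ≤ δ₁ d(U)/(2 D(U)) with ε < d(U), and suppose functions u_nn, u_mpc : X → ℝ^n satisfy ‖u_nn(x) − Π_{U'(ε)}(u_mpc(x))‖ ≤ ε for all x, where U'(ε) is the ε-tightened set and u_mpc(x) ∈ U. Then for all x, ‖u_nn(x) − u_mpc(x)‖ ≤ δ₁ and u_nn(x) ∈ U. -/
open Metric

theorem stmt4 {n : ℕ} {X : Type*} (U : Set (EuclideanSpace ℝ (Fin n)))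
    (hconv : Convex ℝ U) (hcomp : IsCompact U) (hint : (0 : EuclideanSpace ℝ (Fin n)) ∈ interior U)
    (δ₁ : ℝ) (hδ₁ : 0 < δ₁)
    (ε : ℝ) (hε0 : 0 ≤ ε) (hε : ε ≤ δ₁ * inradius U / (2 * sradius U)) (hεd : ε < inradius U)
    (P : EuclideanSpace ℝ (Fin n) → EuclideanSpace ℝ (Fin n))
    (hP : IsProjOn (tighten U ε) P)
    (hr : ∀ u ∈ U, ‖u - P u‖ ≤ ε * sradius U / inradius U)
    (u_nn u_mpc : X → EuclideanSpace ℝ (Fin n))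
    (hmpc : ∀ x, u_mpc x ∈ U)
    (happrox : ∀ x, ‖u_nn x - P (u_mpc x)‖ ≤ ε) :
    ∀ x, ‖u_nn x - u_mpc x‖ ≤ δ₁ ∧ u_nn x ∈ U := by
  intro x
  have h0U : (0 : EuclideanSpace ℝ (Fin n)) ∈ U := interior_subset hint
  -- membership of u_nn x in U
  have htight := (hP (u_mpc x)).1
  have hmemU : u_nn x ∈ U := by
    have := htight.2 (u_nn x - P (u_mpc x)) (happrox x)
    rwa [show P (u_mpc x) + (u_nn x - P (u_mpc x)) = u_nn x by abel] at this
  refine ⟨?_, hmemU⟩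
  -- n = 0 is contradictory
  rcases Nat.eq_zero_or_pos n with h0 | hn
  · exfalso
    subst h0
    have hset : {δ : ℝ | closedBall (0 : EuclideanSpace ℝ (Fin 0)) δ ⊆ U} = Set.univ := by
      ext δ
      simp only [Set.mem_setOf_eq, Set.mem_univ, iff_true]
      intro y _
      have : y = 0 := Subsingleton.elim y 0
      rw [this]; exact h0U
    have : inradius U = 0 := by rw [inradius, hset, Real.sSup_univ]
    rw [this] at hεd
    linarith
  -- bounds
  set d := inradius U with hd_def
  set D := sradius U with hD_def
  have hd : 0 < d := lt_of_le_of_lt hε0 hεd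
  obtain ⟨R, hR⟩ := hcomp.isBounded.subset_closedBall 0
  have hbdd : BddAbove ((fun u => ‖u‖) '' U) := by
    refine ⟨R, ?_⟩
    rintro r ⟨u, huU, rfl⟩
    simpa [dist_eq_norm] using hR huU
  have hnorm_le : ∀ u ∈ U, ‖u‖ ≤ D := fun u hu =>
    le_csSup hbdd ⟨u, hu, rfl⟩
  have hD0 : 0 ≤ D := by simpa using hnorm_le 0 h0U
  have hdD : d ≤ D := by
    refine csSup_le ⟨0, by simpa using h0U⟩ ?_
    intro δ hδ
    rcases le_or_gt δ 0 with h | h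
    · exact h.trans hD0
    · haveI : NeZero n := ⟨hn.ne'⟩
      set e : EuclideanSpace ℝ (Fin n) := EuclideanSpace.single ⟨0, hn⟩ (1 : ℝ) with he
      have hne : ‖e‖ = 1 := by simp [he, EuclideanSpace.norm_single]
      have hmem : δ • e ∈ U := by
        apply hδ
        simp [mem_closedBall, dist_eq_norm, norm_smul, hne, abs_of_pos h]
      have := hnorm_le (δ • e) hmem
      rwa [norm_smul, hne, mul_one, Real.norm_eq_abs, abs_of_pos h] at this
  have hD : 0 < D := lt_of_lt_of_le hd hdD
  -- arithmetic
  have h1 : ε * (2 * D) ≤ δ₁ * d := by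
    have := (le_div_iff₀ (by positivity : (0:ℝ) < 2 * D)).mp hε
    linarith
  have h2 : ε * D / d ≤ δ₁ / 2 := by
    rw [div_le_div_iff₀ hd (by norm_num : (0:ℝ) < 2)]
    nlinarith
  have h3 : ε ≤ δ₁ / 2 := by nlinarith
  -- triangle inequality
  have htri : ‖u_nn x - u_mpc x‖ ≤ ‖u_nn x - P (u_mpc x)‖ + ‖u_mpc x - P (u_mpc x)‖ := by
    have := norm_add_le (u_nn x - P (u_mpc x)) (P (u_mpc x) - u_mpc x)
    rw [show u_nn x - P (u_mpc x) + (P (u_mpc x) - u_mpc x) = u_nn x - u_mpc x by abel] at this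
    rwa [norm_sub_rev (P (u_mpc x)) (u_mpc x)] at this
  have := hr (u_mpc x) (hmpc x)
  have := happrox x
  linarith
end
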